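/- If the binary digit sequence of r is eventually periodic, then the hexagonal lattice path W(r) is either unbounded with positions after successive periods lying on an arithmetic progression k·D + C (case: net turn per period ≡ 0 mod 6 and D ≠ 0), or bounded and visiting only finitely many lattice points (all other cases). -/

import Mathlib

open Finset

noncomputable def ω : ℂ := Complex.exp (Real.pi * Complex.I / 3)

def dir (d0 : ℤ) (z : ℕ → Fin 2) : ℕ → ℤ
  | 0 => d0
  | n + 1 => dir d0 z n + (if z n = 0 then 1 else -1)

noncomputable def pos (d0 : ℤ) (z : ℕ → Fin 2) : ℕ → ℂ
  | 0 => 0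
  | n + 1 => pos d0 z n + ω ^ dir d0 z (n + 1)

/-!
From step `N` on, every period turns the heading by the same amount `τ = dir (N + p) - dir N`,
so one period acts on the path as the affine map `w ↦ u * w + B` with `u = ω ^ τ`. If `u = 1`
then `B = D` and the positions after whole periods form the progression `k * D + pos N`.
Otherwise `u` is a sixth root of unity other than `1`, so `1 + u + ⋯ + u ^ 5 = 0`: the sixth
iterate of the map is the identity, and the path is periodic from step `N` on.
-/

theorem Function.iterate_affine_apply {R : Type*} [Semiring R] (u B w : R) (k : ℕ) :
    (fun w => u * w + B)^[k] w = u ^ k * w + (∑ j ∈ range k, u ^ j) * B := by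
  induction k with
  | zero => simp
  | succ k ih =>
    rw [Function.iterate_succ_apply', ih, geom_sum_succ, pow_succ']
    simp only [mul_add, add_mul, mul_assoc, one_mul, add_assoc]

theorem Function.iterate_affine_eq_id {R : Type*} [CommRing R] [IsDomain R] {u B : R} {n : ℕ}
    (hu : u ^ n = 1) (h : u ≠ 1 ∨ B = 0) : (fun w => u * w + B)^[n] = id := by
  have hgeom : (∑ j ∈ range n, u ^ j) * B = 0 := by
    rcases h with hu1 | rfl
    · have : (∑ j ∈ range n, u ^ j) * (u - 1) = 0 := by rw [geom_sum_mul, hu, sub_self]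
      rw [(mul_eq_zero.1 this).resolve_right (sub_ne_zero.2 hu1), zero_mul]
    · exact mul_zero _
  funext w
  rw [Function.iterate_affine_apply, hu, hgeom, one_mul, add_zero, id]

theorem eq_iterate_of_forall_add_eq {α : Type*} {x : ℕ → α} {f : α → α} {N p : ℕ}
    (hx : ∀ n ≥ N, x (n + p) = f (x n)) (k : ℕ) {n : ℕ} (hn : N ≤ n) :
    x (n + k * p) = f^[k] (x n) := by
  induction k with
  | zero => simp
  | succ k ih =>
    rw [Function.iterate_succ_apply', ← ih, ← hx _ (by omega), add_one_mul, add_assoc]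

theorem Set.finite_range_of_forall_add_eq {α : Type*} {x : ℕ → α} {N q : ℕ} (hq : 0 < q)
    (hx : ∀ n ≥ N, x (n + q) = x n) : (Set.range x).Finite := by
  refine ((Set.finite_Iio (N + q)).image x).subset ?_
  rintro _ ⟨n, rfl⟩
  by_cases hn : n < N
  · exact ⟨n, by simp only [Set.mem_Iio]; omega, rfl⟩
  obtain ⟨r, k, hr, rfl⟩ : ∃ r k, r < q ∧ n = N + r + k * q :=
    ⟨(n - N) % q, (n - N) / q, Nat.mod_lt _ hq, by rw [add_assoc, Nat.mod_add_div']; omega⟩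
  refine ⟨N + r, by simp only [Set.mem_Iio]; omega, ?_⟩
  rw [eq_iterate_of_forall_add_eq (f := id) hx k (by omega), Function.iterate_id, id]

theorem not_exists_forall_norm_natCast_mul_add_le {𝕜 : Type*} [RCLike 𝕜] {D : 𝕜}
    (hD : D ≠ 0) (C : 𝕜) : ¬ ∃ M : ℝ, ∀ k : ℕ, ‖(k : 𝕜) * D + C‖ ≤ M := by
  rintro ⟨M, hM⟩
  obtain ⟨k, hk⟩ := exists_nat_gt ((M + ‖C‖) / ‖D‖)
  rw [div_lt_iff₀ (norm_pos_iff.2 hD)] at hk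
  have := (norm_sub_norm_le ((k : 𝕜) * D) (-C)).trans_eq (by rw [sub_neg_eq_add])
  rw [norm_mul, RCLike.norm_natCast, norm_neg] at this
  linarith [hM k]

theorem isPrimitiveRoot_omega : IsPrimitiveRoot ω 6 := by
  unfold ω
  convert Complex.isPrimitiveRoot_exp 6 (by norm_num) using 2
  push_cast
  ring

theorem omega_zpow_pow_six (t : ℤ) : (ω ^ t) ^ 6 = 1 := by
  rw [← zpow_natCast, ← zpow_mul, isPrimitiveRoot_omega.zpow_eq_one_iff_dvd]
  exact dvd_mul_left _ _

section Path

variable (d0 : ℤ) (z : ℕ → Fin 2)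

theorem dir_add (a b : ℕ) :
    dir d0 z (a + b) = dir d0 z a + ∑ j ∈ Ico a (a + b), if z j = 0 then 1 else -1 := by
  induction b with
  | zero => simp
  | succ b ih =>
    rw [← add_assoc, dir, ih, sum_Ico_succ_top (by omega), add_assoc]

theorem sum_turn_eq_card_sub_card (s : Finset ℕ) :
    ∑ j ∈ s, (if z j = 0 then 1 else -1 : ℤ)
      = (#(s.filter (fun j => z j = 0)) : ℤ) - #(s.filter (fun j => z j = 1)) := by
  have hne : ∀ a : Fin 2, a ≠ 0 ↔ a = 1 := by decide
  simp only [sum_ite, sum_const, nsmul_eq_mul, mul_one, mul_neg, hne, sub_eq_add_neg]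

variable {d0 z} {N p : ℕ} (hper : ∀ i ≥ N, z (i + p) = z i)
include hper

theorem dir_add_period {n : ℕ} (hn : N ≤ n) :
    dir d0 z (n + p) = dir d0 z n + (dir d0 z (N + p) - dir d0 z N) := by
  induction n, hn using Nat.le_induction with
  | base => ring
  | succ n hn ih =>
    rw [add_right_comm, dir, dir, ih, hper n hn]
    ring

theorem pos_add_period {n : ℕ} (hn : N ≤ n) :
    pos d0 z (n + p) = ω ^ (dir d0 z (N + p) - dir d0 z N) * pos d0 z n
      + (pos d0 z (N + p) - ω ^ (dir d0 z (N + p) - dir d0 z N) * pos d0 z N) := by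
  induction n, hn using Nat.le_induction with
  | base => ring
  | succ n hn ih =>
    rw [add_right_comm, pos, pos, ih, ← add_right_comm n 1 p,
      dir_add_period hper (by omega : N ≤ n + 1),
      zpow_add₀ (isPrimitiveRoot_omega.ne_zero (by norm_num))]
    ring

end Path

theorem eventually_periodic_dichotomy (d0 : ℤ) (z : ℕ → Fin 2) (N p : ℕ) (hp : 1 ≤ p)
    (hper : ∀ i ≥ N, z (i + p) = z i)
    (t : ℤ)
    (ht : t = (((Finset.Ico N (N + p)).filter (fun j => z j = 0)).card : ℤ)
            - (((Finset.Ico N (N + p)).filter (fun j => z j = 1)).card : ℤ))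
    (D : ℂ) (hD : D = pos d0 z (N + p) - pos d0 z N) :
    ((6 : ℤ) ∣ t ∧ D ≠ 0 ∧ (∃ C : ℂ, ∀ k : ℕ, pos d0 z (N + k * p) = (k : ℂ) * D + C) ∧
      ¬ ∃ M : ℝ, ∀ n, ‖pos d0 z n‖ ≤ M) ∨
    ((∃ M : ℝ, ∀ n, ‖pos d0 z n‖ ≤ M) ∧ (Set.range (pos d0 z)).Finite) := by
  have hturn : dir d0 z (N + p) - dir d0 z N = t := by
    rw [dir_add, sum_turn_eq_card_sub_card, ht, add_sub_cancel_left]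
  set u := ω ^ t
  set B := pos d0 z (N + p) - u * pos d0 z N
  have hiter := eq_iterate_of_forall_add_eq (f := fun w => u * w + B) (x := pos d0 z)
    (fun n hn => by rw [pos_add_period hper hn, hturn])
  by_cases harith : (6 : ℤ) ∣ t ∧ D ≠ 0
  · have hu : u = 1 := (isPrimitiveRoot_omega.zpow_eq_one_iff_dvd t).2 harith.1
    have hprog (k : ℕ) : pos d0 z (N + k * p) = (k : ℂ) * D + pos d0 z N := by
      rw [hiter k le_rfl, Function.iterate_affine_apply, hu, hD]
      simp only [one_pow, sum_const, card_range, nsmul_eq_mul, mul_one, one_mul, B, hu]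
      ring
    refine .inl ⟨harith.1, harith.2, ⟨_, hprog⟩, fun ⟨M, hM⟩ => ?_⟩
    exact not_exists_forall_norm_natCast_mul_add_le harith.2 _ ⟨M, fun k => hprog k ▸ hM _⟩
  · have hB (hu : u = 1) : B = 0 := by
      have hD0 : D = 0 :=
        not_not.1 (not_and.1 harith ((isPrimitiveRoot_omega.zpow_eq_one_iff_dvd t).1 hu))
      simp only [B, hu, one_mul, ← hD, hD0]
    have hid := Function.iterate_affine_eq_id (omega_zpow_pow_six t) ((ne_or_eq u 1).imp_right hB)
    have hfin := Set.finite_range_of_forall_add_eq (x := pos d0 z) (q := 6 * p) (by omega)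
      fun n hn => by rw [hiter 6 hn, hid, id]
    obtain ⟨M, hM⟩ := isBounded_iff_forall_norm_le.1 hfin.isBounded
    exact .inr ⟨⟨M, fun n => hM _ ⟨n, rfl⟩⟩, hfin⟩
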